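/- arXiv:2112.14141 — 2 statements merged into one kernel-verified Lean document; each statement's English description precedes it below -/
import Mathlib

section
/- Let H, V be real Hilbert spaces, A : H → V bounded linear, b ∈ V, L x = A x + b. Suppose x* ∈ H satisfies L x* = 0 (attainable exact solution) and is the unique solution of L x = 0 in H. For a sequence δ_n → 0 choose ε_n → 0 with δ_n²/ε_n → 0, and let b_n ∈ V with ‖b_n − b‖ ≤ c δ_n; let x_n be the unique minimizer of J_n(x) = (1/2)‖A x + b_n‖² + (ε_n/2)‖x‖². Then x_n → x* strongly in H. -/
/-!
Comparing the minimizer `xₙ` with the exact solution `x*` in the Tikhonov functional gives, for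
every `w`, `‖xₙ - x*‖² ≤ 4‖bₙ - b‖²/εₙ + 4‖x* - A†w‖² + 4εₙ‖w‖²`: expand around `x*` and split
`⟪x*, xₙ - x*⟫ = ⟪x* - A†w, xₙ - x*⟫ + ⟪w, A(xₙ - x*)⟫`. Uniqueness of `x*` makes `A` injective,
so the range of `A†` is dense and the middle term can be made as small as we like, while the
outer ones tend to `0` because `δₙ²/εₙ → 0` and `εₙ → 0`.
-/

open Filter Topology
open scoped InnerProduct RealInnerProductSpace

theorem injective_of_add_eq_zero_unique {E G F : Type*} [AddGroup E] [AddZeroClass G]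
    [FunLike F E G] [AddMonoidHomClass F E G] {f : F} {b : G} {x₀ : E} (hx₀ : f x₀ + b = 0)
    (huniq : ∀ y, f y + b = 0 → y = x₀) : Function.Injective f := by
  refine (injective_iff_map_eq_zero f).mpr fun k hk => ?_
  have : x₀ + k = x₀ := huniq _ (by rw [map_add, hk, add_zero, hx₀])
  simpa using this

section

variable {H V : Type*} [NormedAddCommGroup H] [InnerProductSpace ℝ H]
    [NormedAddCommGroup V] [InnerProductSpace ℝ V]

noncomputable def tikhonov (A : H →L[ℝ] V) (b : V) (ε : ℝ) (x : H) : ℝ :=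
  1 / 2 * ‖A x + b‖ ^ 2 + ε / 2 * ‖x‖ ^ 2

theorem norm_sq_add_inner_le_of_tikhonov_le {A : H →L[ℝ] V} {b b' : V} {ε : ℝ} {x₀ x : H}
    (hx₀ : A x₀ + b = 0) (hle : tikhonov A b' ε x ≤ tikhonov A b' ε x₀) :
    ‖A (x - x₀) + (b' - b)‖ ^ 2 + ε * ‖x - x₀‖ ^ 2 + 2 * ε * ⟪x₀, x - x₀⟫ ≤ ‖b' - b‖ ^ 2 := by
  have hAx₀ : A x₀ = -b := eq_neg_of_add_eq_zero_left hx₀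
  have hres : A x + b' = A (x - x₀) + (b' - b) := by rw [map_sub, hAx₀]; abel
  have hres₀ : A x₀ + b' = b' - b := by rw [hAx₀]; abel
  have hnorm : ‖x‖ ^ 2 = ‖x₀‖ ^ 2 + 2 * ⟪x₀, x - x₀⟫ + ‖x - x₀‖ ^ 2 := by
    rw [← norm_add_sq_real, add_sub_cancel]
  unfold tikhonov at hle
  rw [hres, hres₀, hnorm] at hle
  linarith

variable [CompleteSpace H] [CompleteSpace V]

theorem ContinuousLinearMap.denseRange_adjoint_of_injective {A : H →L[ℝ] V}
    (hA : Function.Injective A) : DenseRange (A† : V → H) := by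
  have : (A†).range.topologicalClosure = ⊤ := by
    rw [Submodule.topologicalClosure_eq_top_iff, ContinuousLinearMap.orthogonal_range,
      ContinuousLinearMap.adjoint_adjoint]
    exact LinearMap.ker_eq_bot.mpr hA
  exact Submodule.dense_iff_topologicalClosure_eq_top.mpr this

theorem norm_sub_sq_le_of_tikhonov_le {A : H →L[ℝ] V} {b b' : V} {ε : ℝ} {x₀ x : H}
    (hε : 0 < ε) (hx₀ : A x₀ + b = 0) (hle : tikhonov A b' ε x ≤ tikhonov A b' ε x₀) (w : V) :
    ‖x - x₀‖ ^ 2 ≤ 4 * (‖b' - b‖ ^ 2 / ε) + 4 * ‖x₀ - (A†) w‖ ^ 2 + 4 * ε * ‖w‖ ^ 2 := by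
  have hsplit : ⟪x₀, x - x₀⟫ =
      ⟪x₀ - (A†) w, x - x₀⟫ + ⟪w, A (x - x₀) + (b' - b)⟫ - ⟪w, b' - b⟫ := by
    rw [inner_sub_left, ContinuousLinearMap.adjoint_inner_left, inner_add_right]
    ring
  have hbasic := norm_sq_add_inner_le_of_tikhonov_le hx₀ hle
  rw [hsplit] at hbasic
  have h₁ := neg_le_of_abs_le (abs_real_inner_le_norm (x₀ - (A†) w) (x - x₀))
  have h₂ := neg_le_of_abs_le (abs_real_inner_le_norm w (A (x - x₀) + (b' - b)))
  have h₃ := real_inner_le_norm w (b' - b)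
  generalize ‖x - x₀‖ = s, ‖b' - b‖ = δ, ‖x₀ - (A†) w‖ = ρ, ‖w‖ = m,
    ‖A (x - x₀) + (b' - b)‖ = u at *
  generalize ⟪x₀ - (A†) w, x - x₀⟫ = i₁, ⟪w, A (x - x₀) + (b' - b)⟫ = i₂, ⟪w, b' - b⟫ = i₃ at *
  have key : s ^ 2 * ε ≤ 4 * δ ^ 2 + 4 * ε * ρ ^ 2 + 4 * ε ^ 2 * m ^ 2 := by
    nlinarith [mul_nonneg hε.le (sq_nonneg (s - 2 * ρ)), sq_nonneg (u - ε * m),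
      sq_nonneg (δ - ε * m)]
  rw [← le_div_iff₀ hε] at key
  refine key.trans_eq ?_
  field_simp

end

theorem stmt_3_general
    {H V : Type*} [NormedAddCommGroup H] [InnerProductSpace ℝ H] [CompleteSpace H]
    [NormedAddCommGroup V] [InnerProductSpace ℝ V] [CompleteSpace V]
    (A : H →L[ℝ] V) (b : V) (L : H → V) (hL : ∀ x, L x = A x + b)
    (xstar : H) (hx : L xstar = 0) (huniq : ∀ y : H, L y = 0 → y = xstar)
    (δ ε : ℕ → ℝ) (hεpos : ∀ n, 0 < ε n)
    (hε : Tendsto ε atTop (𝓝 0))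
    (hδε : Tendsto (fun n => δ n ^ 2 / ε n) atTop (𝓝 0))
    (c : ℝ)
    (bn : ℕ → V) (hbn : ∀ n, ‖bn n - b‖ ≤ c * δ n)
    (J : ℕ → H → ℝ)
    (hJ : ∀ n x, J n x = (1 / 2) * ‖A x + bn n‖ ^ 2 + (ε n / 2) * ‖x‖ ^ 2)
    (x : ℕ → H) (hmin : ∀ n, ∀ y : H, J n (x n) ≤ J n y) :
    Tendsto x atTop (𝓝 xstar) := by
  have hxstar : A xstar + b = 0 := hL xstar ▸ hx
  have hA : Function.Injective A :=
    injective_of_add_eq_zero_unique hxstar fun y hy => huniq y (by rwa [hL])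
  rw [Metric.tendsto_nhds]
  intro θ hθ
  obtain ⟨w, hw⟩ :=
    Metric.denseRange_iff.mp (A.denseRange_adjoint_of_injective hA) xstar _ (half_pos hθ)
  have hbound : Tendsto (fun n => 4 * (c ^ 2 * (δ n ^ 2 / ε n)) + 4 * ‖xstar - (A†) w‖ ^ 2
      + 4 * ε n * ‖w‖ ^ 2) atTop (𝓝 (4 * ‖xstar - (A†) w‖ ^ 2)) := by
    simpa using ((hδε.const_mul (c ^ 2)).const_mul 4).add_const _ |>.add
      ((hε.const_mul 4).mul_const (‖w‖ ^ 2))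
  have hlt : 4 * ‖xstar - (A†) w‖ ^ 2 < θ ^ 2 := by
    rw [dist_eq_norm] at hw
    nlinarith [norm_nonneg (xstar - (A†) w)]
  filter_upwards [hbound.eventually_lt_const hlt] with n hn
  have hle : tikhonov A (bn n) (ε n) (x n) ≤ tikhonov A (bn n) (ε n) xstar := by
    simpa only [tikhonov, hJ] using hmin n xstar
  have hnoise : ‖bn n - b‖ ^ 2 / ε n ≤ c ^ 2 * (δ n ^ 2 / ε n) := by
    rw [← mul_div_assoc, ← mul_pow]
    gcongr
    · exact (hεpos n).le
    · exact hbn n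
  rw [dist_eq_norm]
  refine lt_of_pow_lt_pow_left₀ 2 hθ.le ?_
  calc ‖x n - xstar‖ ^ 2 ≤ _ := norm_sub_sq_le_of_tikhonov_le (hεpos n) hxstar hle w
    _ ≤ _ := by gcongr
    _ < θ ^ 2 := hn

/-- Convergence of Tikhonov regularized solutions with noisy data to the exact
attainable solution, under `δₙ → 0`, `εₙ → 0`, `δₙ²/εₙ → 0`. -/
theorem stmt_3
    {H V : Type*} [NormedAddCommGroup H] [InnerProductSpace ℝ H] [CompleteSpace H]
    [NormedAddCommGroup V] [InnerProductSpace ℝ V] [CompleteSpace V]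
    (A : H →L[ℝ] V) (b : V) (L : H → V) (hL : ∀ x, L x = A x + b)
    (xstar : H) (hx : L xstar = 0) (huniq : ∀ y : H, L y = 0 → y = xstar)
    (δ ε : ℕ → ℝ) (hδpos : ∀ n, 0 ≤ δ n) (hεpos : ∀ n, 0 < ε n)
    (hδ : Tendsto δ atTop (𝓝 0)) (hε : Tendsto ε atTop (𝓝 0))
    (hδε : Tendsto (fun n => δ n ^ 2 / ε n) atTop (𝓝 0))
    (c : ℝ) (hc : 0 < c)
    (bn : ℕ → V) (hbn : ∀ n, ‖bn n - b‖ ≤ c * δ n)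
    (J : ℕ → H → ℝ)
    (hJ : ∀ n x, J n x = (1 / 2) * ‖A x + bn n‖ ^ 2 + (ε n / 2) * ‖x‖ ^ 2)
    (x : ℕ → H) (hmin : ∀ n, ∀ y : H, J n (x n) ≤ J n y)
    (hminuniq : ∀ n, ∀ y : H, (∀ z : H, J n y ≤ J n z) → y = x n) :
    Tendsto x atTop (𝓝 xstar) :=
  stmt_3_general A b L hL xstar hx huniq δ ε hεpos hε hδε c bn hbn J hJ x hmin
end

section
/- With the notation of the previous statement, the minimizers x_n satisfy the a priori bound ‖x_n‖² ≤ c δ_n²/ε_n + ‖x*‖², and J_n(x_n) ≤ c δ_n² + (ε_n/2)‖x*‖², hence J_n(x_n) → 0. -/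
open Filter Topology

/-- A priori bounds for the Tikhonov minimizers with noisy data:
`‖xₙ‖² ≤ c δₙ²/εₙ + ‖x*‖²`, `Jₙ(xₙ) ≤ c δₙ² + (εₙ/2)‖x*‖²`, hence `Jₙ(xₙ) → 0`. -/
theorem stmt_4
    {H V : Type*} [NormedAddCommGroup H] [InnerProductSpace ℝ H] [CompleteSpace H]
    [NormedAddCommGroup V] [InnerProductSpace ℝ V] [CompleteSpace V]
    (A : H →L[ℝ] V) (b : V) (L : H → V) (hL : ∀ x, L x = A x + b)
    (xstar : H) (hx : L xstar = 0) (huniq : ∀ y : H, L y = 0 → y = xstar)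
    (δ ε : ℕ → ℝ) (hδpos : ∀ n, 0 ≤ δ n) (hεpos : ∀ n, 0 < ε n)
    (hδ : Tendsto δ atTop (𝓝 0)) (hε : Tendsto ε atTop (𝓝 0))
    (hδε : Tendsto (fun n => δ n ^ 2 / ε n) atTop (𝓝 0))
    (c : ℝ) (hc : 0 < c)
    (bn : ℕ → V) (hbn : ∀ n, ‖bn n - b‖ ≤ c * δ n)
    (J : ℕ → H → ℝ)
    (hJ : ∀ n x, J n x = (1 / 2) * ‖A x + bn n‖ ^ 2 + (ε n / 2) * ‖x‖ ^ 2)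
    (x : ℕ → H) (hmin : ∀ n, ∀ y : H, J n (x n) ≤ J n y) :
    (∃ c' : ℝ, 0 < c' ∧ ∀ n,
        ‖x n‖ ^ 2 ≤ c' * δ n ^ 2 / ε n + ‖xstar‖ ^ 2 ∧
        J n (x n) ≤ c' * δ n ^ 2 + (ε n / 2) * ‖xstar‖ ^ 2) ∧
    Tendsto (fun n => J n (x n)) atTop (𝓝 0) := by
  have hAx : ∀ n, A xstar + bn n = bn n - b := by
    intro n
    have h0 : A xstar + b = 0 := by rw [← hL]; exact hx
    have : A xstar = -b := by
      rw [eq_neg_iff_add_eq_zero]; exact h0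
    rw [this]; abel
  have hJtight : ∀ n, J n (x n) ≤ (c ^ 2 / 2) * δ n ^ 2 + (ε n / 2) * ‖xstar‖ ^ 2 := by
    intro n
    have h1 : J n (x n) ≤ J n xstar := hmin n xstar
    have h2 : J n xstar = (1 / 2) * ‖bn n - b‖ ^ 2 + (ε n / 2) * ‖xstar‖ ^ 2 := by
      rw [hJ, hAx]
    have h3 : ‖bn n - b‖ ^ 2 ≤ (c * δ n) ^ 2 := by
      have := hbn n
      nlinarith [norm_nonneg (bn n - b)]
    nlinarith [sq_nonneg (c * δ n)]
  have hJbound : ∀ n, J n (x n) ≤ c ^ 2 * δ n ^ 2 + (ε n / 2) * ‖xstar‖ ^ 2 := by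
    intro n
    have := hJtight n
    nlinarith [sq_nonneg (δ n), sq_nonneg c]
  have hJnonneg : ∀ n, 0 ≤ J n (x n) := by
    intro n; rw [hJ n (x n)]
    have h1 : (0:ℝ) ≤ 1 / 2 * ‖A (x n) + bn n‖ ^ 2 := by positivity
    have h2 : (0:ℝ) ≤ ε n / 2 * ‖x n‖ ^ 2 :=
      mul_nonneg (by linarith [hεpos n]) (sq_nonneg _)
    linarith
  have hnorm : ∀ n, ‖x n‖ ^ 2 ≤ c ^ 2 * δ n ^ 2 / ε n + ‖xstar‖ ^ 2 := by
    intro n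
    have hJn := hJ n (x n)
    have hb := hJtight n
    have hεn := hεpos n
    have key : ε n * ‖x n‖ ^ 2 ≤ c ^ 2 * δ n ^ 2 + ε n * ‖xstar‖ ^ 2 := by
      nlinarith [norm_nonneg (A (x n) + bn n), sq_nonneg ‖A (x n) + bn n‖]
    have h4 : (‖x n‖ ^ 2 - ‖xstar‖ ^ 2) ≤ c ^ 2 * δ n ^ 2 / ε n := by
      rw [le_div_iff₀ hεn]; nlinarith
    linarith
  refine ⟨⟨c ^ 2, by positivity, fun n => ⟨hnorm n, hJbound n⟩⟩, ?_⟩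
  have h1 : Tendsto (fun n => c ^ 2 * δ n ^ 2 + (ε n / 2) * ‖xstar‖ ^ 2) atTop (𝓝 0) := by
    have hd2 : Tendsto (fun n => c ^ 2 * δ n ^ 2) atTop (𝓝 0) := by
      have := (hδ.mul hδ).const_mul (c ^ 2)
      simpa [pow_two, mul_assoc] using this
    have he2 : Tendsto (fun n => (ε n / 2) * ‖xstar‖ ^ 2) atTop (𝓝 0) := by
      have := (hε.div_const 2).mul_const (‖xstar‖ ^ 2)
      simpa using this
    simpa using hd2.add he2
  exact squeeze_zero hJnonneg hJbound h1
end
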